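/- arXiv:2306.16432 — 2 statements merged into one kernel-verified Lean document; each statement's English description precedes it below -/
import Mathlib

section
/- Conservation of the product N_S M_S when q(1,1) = 0 (equation (3.18) in the proof of Proposition 3.5): Assume b = 0 and 0 < a ≤ 1. Then the solution of the macroscopic Dirac ODE system satisfies N_S(t) · M_S(t) = N_{S,0} · M_{S,0} for all t ≥ 0. -/
open Set

/-! By the product rule and the equations for `N_S` and `M_S`, the terms in `a` cancel and
`(N_S M_S)' = -b N_S N_I M_I M_S`. So for `b = 0` the product has zero right derivative on
`[0, ∞)` and is constant there. -/

theorem eq_of_hasDerivWithinAt_Ici_zero {E : Type*} [NormedAddCommGroup E] [NormedSpace ℝ E]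
    {f : ℝ → E} {x₀ : ℝ} (hf : ∀ t ∈ Ici x₀, HasDerivWithinAt f 0 (Ici x₀) t) :
    ∀ t ∈ Ici x₀, f t = f x₀ := by
  intro t ht
  have hcont : ContinuousOn f (Icc x₀ t) := fun x hx =>
    (hf x hx.1).continuousWithinAt.mono Icc_subset_Ici_self
  exact constant_of_has_deriv_right_zero hcont
    (fun x hx => (hf x hx.1).mono (Ici_subset_Ici.2 hx.1)) t ⟨ht, le_rfl⟩

theorem hasDerivWithinAt_NS_mul_MS {a b : ℝ} {NS NI MS MI : ℝ → ℝ} {s : Set ℝ} {t : ℝ}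
    (hdNS : HasDerivWithinAt NS
      (-(NS t * NI t * MI t * (a * (1 - MS t) + b * MS t))) s t)
    (hdMS : HasDerivWithinAt MS (NI t * MI t * (a - b) * (1 - MS t) * MS t) s t) :
    HasDerivWithinAt (fun u => NS u * MS u) (-(b * NS t * NI t * MI t * MS t)) s t := by
  have hprod : HasDerivWithinAt (fun u => NS u * MS u) _ s t := hdNS.mul hdMS
  convert hprod using 1
  ring

theorem conservation_NSMS_general
    (a b NS0 MS0 : ℝ)
    (NS NI MS MI : ℝ → ℝ)
    (hNSinit : NS 0 = NS0)
    (hMSinit : MS 0 = MS0)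
    (hdNS : ∀ t ∈ Ici (0:ℝ), HasDerivWithinAt NS
      (-(NS t * NI t * MI t * (a * (1 - MS t) + b * MS t))) (Ici 0) t)
    (hdMS : ∀ t ∈ Ici (0:ℝ), HasDerivWithinAt MS
      (NI t * MI t * (a - b) * (1 - MS t) * MS t) (Ici 0) t)
    (hb : b = 0)
    : ∀ t ∈ Ici (0:ℝ), NS t * MS t = NS0 * MS0 := by
  subst hb hNSinit hMSinit
  refine eq_of_hasDerivWithinAt_Ici_zero (f := fun u => NS u * MS u) fun t ht => ?_
  simpa using hasDerivWithinAt_NS_mul_MS (hdNS t ht) (hdMS t ht)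

/-- Conservation of the product `N_S M_S` when `q(1,1) = 0` (equation (3.18) in the
proof of Proposition 3.5). -/
theorem conservation_NSMS
    (a b A B NS0 MS0 MI0 : ℝ)
    (ha0 : 0 ≤ a) (ha1 : a ≤ 1) (hb0 : 0 ≤ b) (hb1 : b ≤ 1)
    (hA0 : 0 < A) (hA1 : A ≤ 1) (hB0 : 0 < B) (hB1 : B ≤ 1)
    (NS NI MS MI : ℝ → ℝ)
    (hNSinit : NS 0 = NS0) (hNS0 : NS0 ∈ Ioo (0:ℝ) 1)
    (hNIinit : NI 0 = 1 - NS0)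
    (hMSinit : MS 0 = MS0) (hMS0 : MS0 ∈ Ioo (0:ℝ) 1)
    (hMIinit : MI 0 = MI0) (hMI0 : MI0 ∈ Ioo (0:ℝ) 1)
    (hdNS : ∀ t ∈ Ici (0:ℝ), HasDerivWithinAt NS
      (-(NS t * NI t * MI t * (a * (1 - MS t) + b * MS t))) (Ici 0) t)
    (hdNI : ∀ t ∈ Ici (0:ℝ), HasDerivWithinAt NI
      (NS t * NI t * MI t * (a * (1 - MS t) + b * MS t)) (Ici 0) t)
    (hdMS : ∀ t ∈ Ici (0:ℝ), HasDerivWithinAt MS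
      (NI t * MI t * (a - b) * (1 - MS t) * MS t) (Ici 0) t)
    (hdMI : ∀ t ∈ Ici (0:ℝ), HasDerivWithinAt MI
      (NS t * MI t * (A * a * (1 - MS t) + B * b * MS t
        - MI t * (a * (1 - MS t) + b * MS t))) (Ici 0) t)
    (hbnd : ∀ t ∈ Ici (0:ℝ), NS t ∈ Icc (0:ℝ) 1 ∧ NI t ∈ Icc (0:ℝ) 1 ∧
      MS t ∈ Icc (0:ℝ) 1 ∧ MI t ∈ Icc (0:ℝ) 1 ∧ NS t + NI t = 1)
    (hb : b = 0) (hapos : 0 < a)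
    : ∀ t ∈ Ici (0:ℝ), NS t * MS t = NS0 * MS0 :=
  conservation_NSMS_general a b NS0 MS0 NS NI MS MI hNSinit hMSinit hdNS hdMS hb
end

section
/- Conserved quantity relating M_I and M_S when q(1,1) = 0 (intermediate claim in the proof of Proposition 3.5): Assume b = 0 and 0 < a ≤ 1. Then the solution of the macroscopic Dirac ODE system satisfies, for all t ≥ 0: M_S(t) > 0, the sign of (A - M_I(t)) equals the sign of (A - M_{I,0}), and (A - M_I(t)) · (M_S(t) - M_{S,0} N_{S,0}) = (A - M_{I,0}) · (1 - N_{S,0}) · M_S(t). -/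
/-!
With `b = 0` both `M_S` and `A - M_I` decay at a rate opposite to the growth rate of the
population they are paired with: `M_S'/M_S = -N_S'/N_S` and `(A - M_I)'/(A - M_I) = -N_I'/N_I`.
Hence `M_S N_S` and `(A - M_I) N_I` are conserved. The first, being positive, forces `M_S > 0`;
the second, together with `N_I ≥ N_I(0) > 0` (as `N_I` is nondecreasing), preserves the sign
of `A - M_I`; and eliminating `N_S = 1 - N_I` between the two gives the identity.
-/

open Set

theorem Real.sign_mul_of_pos_left {p x : ℝ} (hp : 0 < p) : Real.sign (p * x) = Real.sign x := by
  rcases lt_trichotomy x 0 with hx | rfl | hx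
  · rw [Real.sign_of_neg hx, Real.sign_of_neg (mul_neg_of_pos_of_neg hp hx)]
  · simp
  · rw [Real.sign_of_pos hx, Real.sign_of_pos (mul_pos hp hx)]

section OnIci

variable {f g k : ℝ → ℝ} {t₀ t : ℝ}

theorem eq_of_hasDerivWithinAt_Ici_zero_s15
    (hf : ∀ s ∈ Ici t₀, HasDerivWithinAt f 0 (Ici t₀) s) (ht : t₀ ≤ t) : f t = f t₀ := by
  have hcont : ContinuousOn f (Icc t₀ t) := fun s hs =>
    (hf s hs.1).continuousWithinAt.mono Icc_subset_Ici_self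
  exact constant_of_has_deriv_right_zero hcont
    (fun s hs => (hf s hs.1).mono (Ici_subset_Ici.mpr hs.1)) t ⟨ht, le_rfl⟩

theorem monotoneOn_Ici_of_hasDerivWithinAt_nonneg {f' : ℝ → ℝ}
    (hf : ∀ s ∈ Ici t₀, HasDerivWithinAt f (f' s) (Ici t₀) s)
    (hf' : ∀ s ∈ Ici t₀, 0 ≤ f' s) : MonotoneOn f (Ici t₀) := by
  refine monotoneOn_of_hasDerivWithinAt_nonneg (convex_Ici t₀) (f' := f')
    (fun s hs => (hf s hs).continuousWithinAt) (fun s hs => ?_) (fun s hs => ?_)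
  · rw [interior_Ici] at hs ⊢
    exact (hf s (Ioi_subset_Ici_self hs)).mono Ioi_subset_Ici_self
  · rw [interior_Ici] at hs
    exact hf' s (Ioi_subset_Ici_self hs)

theorem mul_eq_of_hasDerivWithinAt_opposite_rates
    (hf : ∀ s ∈ Ici t₀, HasDerivWithinAt f (k s * f s) (Ici t₀) s)
    (hg : ∀ s ∈ Ici t₀, HasDerivWithinAt g (-(k s * g s)) (Ici t₀) s) (ht : t₀ ≤ t) :
    f t * g t = f t₀ * g t₀ :=
  eq_of_hasDerivWithinAt_Ici_zero_s15 (f := fun s => f s * g s)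
    (fun s hs => ((hf s hs).mul (hg s hs)).congr_deriv (by ring)) ht

end OnIci

theorem conserved_MI_MS_general
    (a b A B NS0 MS0 MI0 : ℝ)
    (ha0 : 0 ≤ a)
    (NS NI MS MI : ℝ → ℝ)
    (hNSinit : NS 0 = NS0) (hNS0 : NS0 ∈ Ioo (0:ℝ) 1)
    (hNIinit : NI 0 = 1 - NS0)
    (hMSinit : MS 0 = MS0) (hMS0 : MS0 ∈ Ioo (0:ℝ) 1)
    (hMIinit : MI 0 = MI0)
    (hdNS : ∀ t ∈ Ici (0:ℝ), HasDerivWithinAt NS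
      (-(NS t * NI t * MI t * (a * (1 - MS t) + b * MS t))) (Ici 0) t)
    (hdNI : ∀ t ∈ Ici (0:ℝ), HasDerivWithinAt NI
      (NS t * NI t * MI t * (a * (1 - MS t) + b * MS t)) (Ici 0) t)
    (hdMS : ∀ t ∈ Ici (0:ℝ), HasDerivWithinAt MS
      (NI t * MI t * (a - b) * (1 - MS t) * MS t) (Ici 0) t)
    (hdMI : ∀ t ∈ Ici (0:ℝ), HasDerivWithinAt MI
      (NS t * MI t * (A * a * (1 - MS t) + B * b * MS t
        - MI t * (a * (1 - MS t) + b * MS t))) (Ici 0) t)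
    (hbnd : ∀ t ∈ Ici (0:ℝ), NS t ∈ Icc (0:ℝ) 1 ∧ NI t ∈ Icc (0:ℝ) 1 ∧
      MS t ∈ Icc (0:ℝ) 1 ∧ MI t ∈ Icc (0:ℝ) 1 ∧ NS t + NI t = 1)
    (hb : b = 0)
    : ∀ t ∈ Ici (0:ℝ), 0 < MS t ∧
      Real.sign (A - MI t) = Real.sign (A - MI0) ∧
      (A - MI t) * (MS t - MS0 * NS0) = (A - MI0) * (1 - NS0) * MS t := by
  subst hb
  intro t ht
  have hMSNS : MS t * NS t = MS0 * NS0 := by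
    rw [← hMSinit, ← hNSinit]
    exact mul_eq_of_hasDerivWithinAt_opposite_rates (k := fun s => NI s * MI s * a * (1 - MS s))
      (fun s hs => (hdMS s hs).congr_deriv (by ring))
      (fun s hs => (hdNS s hs).congr_deriv (by ring)) ht
  have hNIMI : NI t * (A - MI t) = (1 - NS0) * (A - MI0) := by
    rw [← hMIinit, ← hNIinit]
    exact mul_eq_of_hasDerivWithinAt_opposite_rates (k := fun s => NS s * MI s * a * (1 - MS s))
      (fun s hs => (hdNI s hs).congr_deriv (by ring))
      (fun s hs => ((hdMI s hs).const_sub A).congr_deriv (by ring)) ht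
  have hNI_mono : MonotoneOn NI (Ici 0) := monotoneOn_Ici_of_hasDerivWithinAt_nonneg hdNI
    fun s hs => by
      obtain ⟨hNS, hNI, hMS, hMI, -⟩ := hbnd s hs
      rw [zero_mul, add_zero]
      exact mul_nonneg (mul_nonneg (mul_nonneg hNS.1 hNI.1) hMI.1)
        (mul_nonneg ha0 (sub_nonneg.mpr hMS.2))
  have hNI0_pos : 0 < 1 - NS0 := by linarith [hNS0.2]
  have hNI_pos : 0 < NI t := calc
    0 < 1 - NS0 := hNI0_pos
    _ = NI 0 := hNIinit.symm
    _ ≤ NI t := hNI_mono self_mem_Ici ht ht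
  obtain ⟨hNS, -, -, -, hsum⟩ := hbnd t ht
  refine ⟨pos_of_mul_pos_left (hMSNS ▸ mul_pos hMS0.1 hNS0.1) hNS.1, ?_, ?_⟩
  · rw [← Real.sign_mul_of_pos_left hNI_pos, hNIMI, Real.sign_mul_of_pos_left hNI0_pos]
  · linear_combination (A - MI t) * hMSNS + MS t * hNIMI - (A - MI t) * MS t * hsum

/-- Conserved quantity relating `M_I` and `M_S` when `q(1,1) = 0` (intermediate claim
in the proof of Proposition 3.5). -/
theorem conserved_MI_MS
    (a b A B NS0 MS0 MI0 : ℝ)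
    (ha0 : 0 ≤ a) (ha1 : a ≤ 1) (hb0 : 0 ≤ b) (hb1 : b ≤ 1)
    (hA0 : 0 < A) (hA1 : A ≤ 1) (hB0 : 0 < B) (hB1 : B ≤ 1)
    (NS NI MS MI : ℝ → ℝ)
    (hNSinit : NS 0 = NS0) (hNS0 : NS0 ∈ Ioo (0:ℝ) 1)
    (hNIinit : NI 0 = 1 - NS0)
    (hMSinit : MS 0 = MS0) (hMS0 : MS0 ∈ Ioo (0:ℝ) 1)
    (hMIinit : MI 0 = MI0) (hMI0 : MI0 ∈ Ioo (0:ℝ) 1)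
    (hdNS : ∀ t ∈ Ici (0:ℝ), HasDerivWithinAt NS
      (-(NS t * NI t * MI t * (a * (1 - MS t) + b * MS t))) (Ici 0) t)
    (hdNI : ∀ t ∈ Ici (0:ℝ), HasDerivWithinAt NI
      (NS t * NI t * MI t * (a * (1 - MS t) + b * MS t)) (Ici 0) t)
    (hdMS : ∀ t ∈ Ici (0:ℝ), HasDerivWithinAt MS
      (NI t * MI t * (a - b) * (1 - MS t) * MS t) (Ici 0) t)
    (hdMI : ∀ t ∈ Ici (0:ℝ), HasDerivWithinAt MI
      (NS t * MI t * (A * a * (1 - MS t) + B * b * MS t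
        - MI t * (a * (1 - MS t) + b * MS t))) (Ici 0) t)
    (hbnd : ∀ t ∈ Ici (0:ℝ), NS t ∈ Icc (0:ℝ) 1 ∧ NI t ∈ Icc (0:ℝ) 1 ∧
      MS t ∈ Icc (0:ℝ) 1 ∧ MI t ∈ Icc (0:ℝ) 1 ∧ NS t + NI t = 1)
    (hb : b = 0) (hapos : 0 < a)
    : ∀ t ∈ Ici (0:ℝ), 0 < MS t ∧
      Real.sign (A - MI t) = Real.sign (A - MI0) ∧
      (A - MI t) * (MS t - MS0 * NS0) = (A - MI0) * (1 - NS0) * MS t :=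
  conserved_MI_MS_general a b A B NS0 MS0 MI0 ha0 NS NI MS MI hNSinit hNS0 hNIinit hMSinit hMS0
    hMIinit hdNS hdNI hdMS hdMI hbnd hb
end
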